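/- Every Hamiltonian cycle of the line graph L(G'), where G' is obtained from G by subdividing every edge twice, arises from an Euler tour of G': the sequence of edges of G' corresponding to the vertex sequence of the Hamiltonian cycle is an Euler tour of G'. -/

import Mathlib

open SimpleGraph

/-- The smaller endpoint of an edge (under a fixed linear order on the vertices). -/
def Sym2.emin {V : Type} [LinearOrder V] (e : Sym2 V) : V :=
  Sym2.lift ⟨min, fun _ _ => min_comm _ _⟩ e

/-- The larger endpoint of an edge. -/
def Sym2.emax {V : Type} [LinearOrder V] (e : Sym2 V) : V :=
  Sym2.lift ⟨max, fun _ _ => max_comm _ _⟩ e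

/-- Base relation for the graph `G'` obtained from `G` by replacing every edge
`e = (u,v)` by the path `u - x_e - y_e - v`: the new vertices are pairs `(e, b)`
where `(e, false)` is `x_e` (attached to the smaller endpoint of `e`) and
`(e, true)` is `y_e` (attached to the larger endpoint). -/
def subdivRel {V : Type} [LinearOrder V] (G : SimpleGraph V) :
    (V ⊕ (G.edgeSet × Bool)) → (V ⊕ (G.edgeSet × Bool)) → Prop
  | Sum.inl u, Sum.inr (e, b) => b = false ∧ u = Sym2.emin (e : Sym2 V)
  | Sum.inr (e, b), Sum.inl v => b = true ∧ v = Sym2.emax (e : Sym2 V)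
  | Sum.inr (e, b), Sum.inr (e', b') => (e : Sym2 V) = (e' : Sym2 V) ∧ b = false ∧ b' = true
  | _, _ => False

/-- The graph obtained from `G` by subdividing every edge twice
(replacing each edge by a path of length three). -/
def subdiv2 {V : Type} [LinearOrder V] (G : SimpleGraph V) :
    SimpleGraph (V ⊕ (G.edgeSet × Bool)) :=
  SimpleGraph.fromRel (subdivRel G)

/-!
Consecutive vertices of a Hamiltonian cycle of `L(G')` are edges of `G'` sharing a vertex, and
the cycle lifts to a closed walk of `G'` through these shared vertices as long as no three
consecutive edges of the cycle pass through one vertex. A subdivision vertex lies on only two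
edges, so such a vertex would be an original vertex `u`, lying on an outer edge `a = u x_e`. But
the middle edge `x_e y_e` meets only the two outer edges of `e`, so the cycle enters and leaves it
through them: it is one of the two cycle-neighbours of `a`, and it misses `u`. As the cycle visits
every edge of `G'` exactly once, the lifted walk is an Euler tour.
-/

namespace SimpleGraph.Walk

variable {α : Type*} {Γ : SimpleGraph α}

lemma toSubgraph_adj_of_mem_darts {u v : α} {p : Γ.Walk u v} {d : Γ.Dart} (hd : d ∈ p.darts) :
    p.toSubgraph.Adj d.fst d.snd :=
  adj_toSubgraph_iff_mem_edges.mpr (List.mem_map_of_mem hd)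

theorem IsTrail.fst_ne_snd_of_snd_eq_fst {u v : α} {p : Γ.Walk u v} (hp : p.IsTrail)
    {d d' : Γ.Dart} (hd : d ∈ p.darts) (hd' : d' ∈ p.darts) (h : d.snd = d'.fst) :
    d.fst ≠ d'.snd := by
  intro h'
  have hsymm : d = d'.symm := Dart.ext _ _ (Prod.ext h' h)
  have hdd' : d = d' :=
    List.inj_on_of_nodup_map hp.edges_nodup hd hd' (by rw [hsymm, Dart.edge_symm])
  subst hdd'
  exact d.snd_ne_fst h

variable {x : α} {c : Γ.Walk x x}

theorem IsCycle.toSubgraph_adj_of_neighborSet_subset_pair (hc : c.IsCycle) {v u w y : α}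
    (hv : v ∈ c.support) (hnbr : Γ.neighborSet v ⊆ {u, w}) (hy : Γ.Adj v y) :
    c.toSubgraph.Adj v y := by
  have hpair : c.toSubgraph.neighborSet v = {u, w} := by
    refine Set.eq_of_subset_of_ncard_le ((c.toSubgraph.neighborSet_subset v).trans hnbr) ?_
    rw [hc.ncard_neighborSet_toSubgraph_eq_two hv]
    exact (Set.ncard_insert_le _ _).trans (by simp)
  rw [← Subgraph.mem_neighborSet, hpair]
  exact hnbr hy

theorem IsCycle.toSubgraph_neighborSet_eq_pair (hc : c.IsCycle) {v u w : α}
    (hu : c.toSubgraph.Adj v u) (hw : c.toSubgraph.Adj v w) (huw : u ≠ w) :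
    c.toSubgraph.neighborSet v = {u, w} := by
  have htwo := hc.ncard_neighborSet_toSubgraph_eq_two (c.mem_verts_toSubgraph.mp hu.fst_mem)
  have hsub : ({u, w} : Set α) ⊆ c.toSubgraph.neighborSet v :=
    Set.insert_subset hu (Set.singleton_subset_iff.mpr hw)
  exact (Set.eq_of_subset_of_ncard_le hsub (by rw [htwo, Set.ncard_pair huw])
    (Set.finite_of_ncard_ne_zero (by rw [htwo]; simp))).symm

theorem IsHamiltonianCycle.count_support_dropLast [DecidableEq α] (hc : c.IsHamiltonianCycle)
    (a : α) : c.support.dropLast.count a = 1 := by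
  have hperm : c.support.dropLast.Perm c.support.tail := by
    refine List.Perm.cons_inv (a := x) ?_
    exact (List.perm_append_singleton _ _).symm.trans
      (List.Perm.of_eq ((dropLast_support_concat c).trans c.cons_tail_support.symm))
  rw [hperm.count_eq, ← support_tail_of_not_nil c hc.isCycle.not_nil]
  exact hc.isHamiltonian_tail a

end SimpleGraph.Walk

namespace SimpleGraph

variable {W : Type*} {H : SimpleGraph W}

noncomputable def Dart.sharedVertex (d : H.lineGraph.Dart) : W :=
  (lineGraph_adj_iff_exists.mp d.adj).2.choose

namespace Dart

lemma sharedVertex_mem_fst (d : H.lineGraph.Dart) : d.sharedVertex ∈ (d.fst : Sym2 W) :=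
  (lineGraph_adj_iff_exists.mp d.adj).2.choose_spec.1

lemma sharedVertex_mem_snd (d : H.lineGraph.Dart) : d.sharedVertex ∈ (d.snd : Sym2 W) :=
  (lineGraph_adj_iff_exists.mp d.adj).2.choose_spec.2

lemma snd_eq_mk_sharedVertex {d d' : H.lineGraph.Dart} (h : d.snd = d'.fst)
    (hne : d.sharedVertex ≠ d'.sharedVertex) :
    (d.snd : Sym2 W) = s(d.sharedVertex, d'.sharedVertex) :=
  (Sym2.mem_and_mem_iff hne).mp ⟨d.sharedVertex_mem_snd, h ▸ d'.sharedVertex_mem_fst⟩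

end Dart

namespace Walk

theorem exists_walk_edges_eq_of_isChain_sharedVertex_ne {a b : H.edgeSet}
    (q : H.lineGraph.Walk a b) (d₀ : H.lineGraph.Dart) (h₀ : d₀.snd = a)
    (hq : (d₀ :: q.darts).IsChain (fun d d' => d.sharedVertex ≠ d'.sharedVertex)) :
    ∃ p : H.Walk d₀.sharedVertex (q.darts.getLastD d₀).sharedVertex,
      p.edges = q.darts.map (fun d => (d.fst : Sym2 W)) := by
  induction q generalizing d₀ with
  | nil => exact ⟨.nil, rfl⟩
  | @cons a a' b hadj q ih =>
    obtain ⟨hne, hq⟩ := List.isChain_cons_cons.mp hq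
    obtain ⟨p, hp⟩ := ih ⟨(a, a'), hadj⟩ rfl hq
    have ha := Dart.snd_eq_mk_sharedVertex h₀ hne
    rw [darts_cons, List.getLastD_cons, List.map_cons]
    refine ⟨.cons (H.mem_edgeSet.mp (ha ▸ d₀.snd.2)) p, ?_⟩
    rw [edges_cons, hp, ← ha, h₀]

theorem exists_closed_walk_edges_eq_of_sharedVertex_ne {x : H.edgeSet}
    (c : H.lineGraph.Walk x x) (hc : ¬ c.Nil)
    (hturn : ∀ d ∈ c.darts, ∀ d' ∈ c.darts, d.snd = d'.fst →
      d.sharedVertex ≠ d'.sharedVertex) :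
    ∃ v, ∃ p : H.Walk v v, p.edges = c.support.dropLast.map Subtype.val := by
  -- Prepending the last dart makes the chain condition cyclic, so the lifted walk closes up.
  have hchain : (c.lastDart hc :: c.darts).IsChain
      (fun d d' => d.sharedVertex ≠ d'.sharedVertex) := by
    refine (isChain_dartAdj_cons_darts (d := c.lastDart hc) rfl c).imp_of_mem_imp ?_
    have hsub : ∀ d ∈ c.lastDart hc :: c.darts, d ∈ c.darts := by
      simp [c.lastDart_mem_darts hc]
    exact fun d d' hd hd' => hturn d (hsub d hd) d' (hsub d' hd')
  have := exists_walk_edges_eq_of_isChain_sharedVertex_ne c _ rfl hchain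
  rw [List.getLastD_eq_getLast?, List.getLast?_eq_some_getLast (darts_eq_nil.not.mpr hc),
    ← lastDart_eq_getLast_darts hc, Option.getD_some] at this
  rw [← map_fst_darts, List.map_map]
  exact ⟨_, this⟩

end Walk

end SimpleGraph

namespace subdiv2

variable {V : Type} [LinearOrder V] {G : SimpleGraph V}

def endpoint (e : G.edgeSet) : Bool → V
  | false => Sym2.emin (e : Sym2 V)
  | true => Sym2.emax (e : Sym2 V)

def outerEdge (e : G.edgeSet) (β : Bool) : (subdiv2 G).edgeSet :=
  ⟨s(Sum.inl (endpoint e β), Sum.inr (e, β)), by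
    cases β <;> simp [subdiv2, subdivRel, endpoint]⟩

def midEdge (e : G.edgeSet) : (subdiv2 G).edgeSet :=
  ⟨s(Sum.inr (e, false), Sum.inr (e, true)), by simp [subdiv2, subdivRel]⟩

lemma inl_notMem_midEdge (u : V) (e : G.edgeSet) : Sum.inl u ∉ (midEdge e).val := by
  simp [midEdge]

lemma inr_mem_outerEdge (e : G.edgeSet) (β : Bool) : Sum.inr (e, β) ∈ (outerEdge e β).val :=
  Sym2.mem_mk_right _ _

lemma inr_mem_midEdge (e : G.edgeSet) (β : Bool) : Sum.inr (e, β) ∈ (midEdge e).val := by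
  cases β <;> simp [midEdge]

lemma outerEdge_ne_midEdge (e e' : G.edgeSet) (β : Bool) : outerEdge e β ≠ midEdge e' :=
  fun h => inl_notMem_midEdge (endpoint e β) e' (h ▸ Sym2.mem_mk_left _ _)

lemma eq_midEdge_or_eq_outerEdge (a : (subdiv2 G).edgeSet) :
    (∃ e, a = midEdge e) ∨ ∃ e β, a = outerEdge e β := by
  obtain ⟨z, hz⟩ := a
  induction z using Sym2.ind with
  | _ p q =>
  rcases p with u | ⟨e, _ | _⟩ <;> rcases q with u' | ⟨e', _ | _⟩ <;>
    simp only [subdiv2, subdivRel, mem_edgeSet, fromRel_adj, ne_eq, Sum.inl.injEq, Sum.inr.injEq,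
      Prod.mk.injEq, reduceCtorEq, Bool.false_eq_true, Bool.true_eq_false, not_false_eq_true,
      true_and, false_and, and_true, and_false, and_self, or_self, or_false, false_or] at hz
  · subst hz
    exact Or.inr ⟨e', false, rfl⟩
  · subst hz
    exact Or.inr ⟨e', true, rfl⟩
  · subst hz
    exact Or.inr ⟨e, false, Subtype.ext Sym2.eq_swap⟩
  · obtain rfl := Subtype.ext hz
    exact Or.inl ⟨e, rfl⟩
  · subst hz
    exact Or.inr ⟨e, true, Subtype.ext Sym2.eq_swap⟩
  · obtain rfl := Subtype.ext hz
    exact Or.inl ⟨e', Subtype.ext Sym2.eq_swap⟩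

lemma eq_midEdge_or_eq_outerEdge_of_inr_mem {a : (subdiv2 G).edgeSet} {e : G.edgeSet}
    {β : Bool} (h : Sum.inr (e, β) ∈ a.val) : a = midEdge e ∨ a = outerEdge e β := by
  rcases eq_midEdge_or_eq_outerEdge a with ⟨e', rfl⟩ | ⟨e', β', rfl⟩
  · simp only [midEdge, Sym2.mem_iff, Sum.inr.injEq, Prod.mk.injEq] at h
    obtain ⟨rfl, -⟩ | ⟨rfl, -⟩ := h <;> exact Or.inl rfl
  · simp only [outerEdge, Sym2.mem_iff, reduceCtorEq, Sum.inr.injEq, Prod.mk.injEq,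
      false_or] at h
    obtain ⟨rfl, rfl⟩ := h
    exact Or.inr rfl

lemma exists_eq_outerEdge_of_inl_mem {a : (subdiv2 G).edgeSet} {u : V}
    (h : Sum.inl u ∈ a.val) : ∃ e β, a = outerEdge e β := by
  rcases eq_midEdge_or_eq_outerEdge a with ⟨e, rfl⟩ | hout
  · exact absurd h (inl_notMem_midEdge u e)
  · exact hout

lemma lineGraph_neighborSet_midEdge_subset (e : G.edgeSet) :
    (subdiv2 G).lineGraph.neighborSet (midEdge e) ⊆ {outerEdge e false, outerEdge e true} := by
  intro b hb
  obtain ⟨hne, w, hwm, hwb⟩ := lineGraph_adj_iff_exists.mp hb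
  obtain ⟨β, rfl⟩ : ∃ β : Bool, w = Sum.inr (e, β) := by
    simp only [midEdge, Sym2.mem_iff] at hwm
    exact hwm.elim (⟨false, ·⟩) (⟨true, ·⟩)
  rcases eq_midEdge_or_eq_outerEdge_of_inr_mem hwb with rfl | rfl
  · exact absurd rfl hne
  · cases β <;> simp

lemma lineGraph_adj_midEdge_outerEdge (e : G.edgeSet) (β : Bool) :
    (subdiv2 G).lineGraph.Adj (midEdge e) (outerEdge e β) :=
  lineGraph_adj_iff_exists.mpr
    ⟨(outerEdge_ne_midEdge e e β).symm, _, inr_mem_midEdge e β, inr_mem_outerEdge e β⟩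

section

open Walk

variable [DecidableEq (subdiv2 G).edgeSet] {x : (subdiv2 G).edgeSet}
  {c : (subdiv2 G).lineGraph.Walk x x}

theorem notMem_of_toSubgraph_adj (hc : c.IsHamiltonianCycle) {a b d : (subdiv2 G).edgeSet}
    (hb : c.toSubgraph.Adj a b) (hd : c.toSubgraph.Adj a d) (hbd : b ≠ d)
    {w : V ⊕ (G.edgeSet × Bool)} (hwa : w ∈ a.val) (hwb : w ∈ b.val) : w ∉ d.val := by
  intro hwd
  rcases w with u | ⟨e, β⟩
  · obtain ⟨e, β, rfl⟩ := exists_eq_outerEdge_of_inl_mem hwa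
    have hmid : c.toSubgraph.Adj (midEdge e) (outerEdge e β) :=
      hc.isCycle.toSubgraph_adj_of_neighborSet_subset_pair (hc.mem_support _)
        (lineGraph_neighborSet_midEdge_subset e) (lineGraph_adj_midEdge_outerEdge e β)
    have hnbr : midEdge e ∈ ({b, d} : Set _) :=
      hc.isCycle.toSubgraph_neighborSet_eq_pair hb hd hbd ▸ hmid.symm
    rcases hnbr with rfl | rfl
    · exact inl_notMem_midEdge u e hwb
    · exact inl_notMem_midEdge u e hwd
  · have hab := hb.adj_sub.ne
    have had := hd.adj_sub.ne
    rcases eq_midEdge_or_eq_outerEdge_of_inr_mem hwa with rfl | rfl <;>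
    rcases eq_midEdge_or_eq_outerEdge_of_inr_mem hwb with rfl | rfl <;>
    rcases eq_midEdge_or_eq_outerEdge_of_inr_mem hwd with rfl | rfl <;>
    simp_all

theorem sharedVertex_ne_of_mem_darts (hc : c.IsHamiltonianCycle)
    {d d' : (subdiv2 G).lineGraph.Dart} (hd : d ∈ c.darts) (hd' : d' ∈ c.darts)
    (h : d.snd = d'.fst) : d.sharedVertex ≠ d'.sharedVertex := by
  intro heq
  exact notMem_of_toSubgraph_adj hc (toSubgraph_adj_of_mem_darts hd).symm
    (h ▸ toSubgraph_adj_of_mem_darts hd') (hc.isCycle.isTrail.fst_ne_snd_of_snd_eq_fst hd hd' h)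
    d.sharedVertex_mem_snd d.sharedVertex_mem_fst (heq ▸ d'.sharedVertex_mem_snd)

end

end subdiv2

open Classical in
/-- every Hamiltonian cycle of the line graph of the twice-subdivided
graph `G'` arises from an Euler tour of `G'`: the sequence of edges of `G'`
corresponding to the vertex sequence of the Hamiltonian cycle is the edge sequence
of a closed Eulerian walk of `G'`. -/
theorem hamCycle_lineGraph_subdiv2_gives_eulerTour
    {V : Type} [LinearOrder V] (G : SimpleGraph V)
    {x : (subdiv2 G).edgeSet} (c : (subdiv2 G).lineGraph.Walk x x)
    (hc : c.IsHamiltonianCycle) :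
    ∃ (v : V ⊕ (G.edgeSet × Bool)) (p : (subdiv2 G).Walk v v),
      p.IsEulerian ∧ p.edges = c.support.dropLast.map Subtype.val := by
  obtain ⟨v, p, hp⟩ := c.exists_closed_walk_edges_eq_of_sharedVertex_ne hc.isCycle.not_nil
    fun d hd d' hd' => subdiv2.sharedVertex_ne_of_mem_darts hc hd hd'
  refine ⟨v, p, fun e he => ?_, hp⟩
  rw [hp, List.count_map_of_injective _ _ Subtype.val_injective ⟨e, he⟩]
  convert hc.count_support_dropLast ⟨e, he⟩
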